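/- (Sum collapse for bandlimited masks, noiseless case) Let x, m ∈ ℂ^d with supp(F_d m) ⊆ [ρ]_0 (i.e., (F_d m)_k = 0 for k ≥ ρ), let 2 ≤ κ ≤ ρ, assume L = ρ + κ - 1 divides d, and let Y ∈ ℝ^{d×L} have entries Y_{ω,ℓ} = |Σ_{n=0}^{d-1} x_n m_{(n - ℓd/L) mod d} e^{-2πinω/d}|^2. Then for all ω ∈ [d]_0 and all α with 0 ≤ α ≤ κ-1, (F_L Y^T F_d^T)_{α,ω} = (L/d^2)(F_d((F_d x) ∘ S_{-α} conj(F_d x)))_ω · (F_d((F_d m) ∘ S_α conj(F_d m)))_ω; and for all α with ρ ≤ α ≤ L-1, (F_L Y^T F_d^T)_{α,ω} = (L/d^2)(F_d((F_d x) ∘ S_{L-α} conj(F_d x)))_ω · (F_d((F_d m) ∘ S_{α-L} conj(F_d m)))_ω. -/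

import Mathlib

open Complex BigOperators Finset

/-- Discrete Fourier transform on `ℂ^d` (indexed by `ZMod d`). -/
noncomputable def dftV (d : ℕ) [NeZero d] (x : ZMod d → ℂ) : ZMod d → ℂ :=
  fun k => ∑ n : ZMod d, x n *
    Complex.exp (-2 * Real.pi * Complex.I * (n.val : ℂ) * (k.val : ℂ) / (d : ℂ))

/-- Circular shift: `(S_ℓ x)_n = x_{n+ℓ}`. -/
def shiftV {d : ℕ} (ℓ : ZMod d) (x : ZMod d → ℂ) : ZMod d → ℂ := fun n => x (n + ℓ)

/-- Reversal: `(R x)_n = x_{-n}`. -/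
def revV {d : ℕ} (x : ZMod d → ℂ) : ZMod d → ℂ := fun n => x (-n)

/-- Componentwise complex conjugation. -/
def conjV {d : ℕ} (x : ZMod d → ℂ) : ZMod d → ℂ := fun n => (starRingEnd ℂ) (x n)

/-- Hadamard (componentwise) product. -/
def hadV {d : ℕ} (x y : ZMod d → ℂ) : ZMod d → ℂ := fun n => x n * y n

/-- Circular convolution. -/
noncomputable def convV (d : ℕ) [NeZero d] (x y : ZMod d → ℂ) : ZMod d → ℂ :=
  fun ℓ => ∑ n : ZMod d, x n * y (ℓ - n)

/-- Modulation: `(W_ℓ x)_n = x_n e^{2πiℓn/d}`. -/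
noncomputable def modV {d : ℕ} (ℓ : ZMod d) (x : ZMod d → ℂ) : ZMod d → ℂ :=
  fun n => x n * Complex.exp (2 * Real.pi * Complex.I * (ℓ.val : ℂ) * (n.val : ℂ) / (d : ℂ))

/-- The `N × N` DFT matrix. -/
noncomputable def dftMat (N : ℕ) : Matrix (ZMod N) (ZMod N) ℂ :=
  fun j k => Complex.exp (-2 * Real.pi * Complex.I * (j.val : ℂ) * (k.val : ℂ) / (N : ℂ))

/-!
Write `c ℓ = ℓ d / L` and `g p = m p * conj (m (p + ω))`. By Wiener–Khinchin, the `d`-point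
DFT of column `ℓ` of `Y` at `ω` is `d * ∑ n, x n * conj (x (n + ω)) * g (n - c ℓ)`. The
`L`-point DFT in `ℓ` of the samples `g (n - c ℓ)` aliases the spectrum of `g` over the
frequencies `j ≡ -α (mod L)`. As `𝓕 m` lives on `[0, ρ)`, the spectrum of `g` consists of
differences of two elements of `[0, ρ)`, and since `L = ρ + κ - 1` such a difference meets the
class of `-α` only at `-β`, the representative with `|β| < κ`. The surviving term factors into
the two DFTs of the claim.
-/

open ZMod AddChar ComplexConjugate

section Fourier

variable {N : ℕ} [NeZero N]

lemma exp_neg_two_pi_I_val_mul_val_eq_stdAddChar (j k : ZMod N) :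
    Complex.exp (-2 * Real.pi * Complex.I * (j.val : ℂ) * (k.val : ℂ) / (N : ℂ)) =
      stdAddChar (-(j * k)) := by
  have : -(j * k) = (Int.cast (-(j.val * k.val : ℤ)) : ZMod N) := by simp
  rw [this, stdAddChar_coe]
  congr 1
  push_cast
  ring

lemma dftV_eq_dft (x : ZMod N → ℂ) : dftV N x = 𝓕 x := by
  ext k
  refine Finset.sum_congr rfl fun n _ => ?_
  rw [exp_neg_two_pi_I_val_mul_val_eq_stdAddChar, smul_eq_mul, mul_comm]

lemma dftMat_apply (j k : ZMod N) : dftMat N j k = stdAddChar (-(j * k)) :=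
  exp_neg_two_pi_I_val_mul_val_eq_stdAddChar j k

lemma conj_dft_apply (y : ZMod N → ℂ) (k : ZMod N) :
    conj (𝓕 y k) = ∑ n, stdAddChar (n * k) * conj (y n) := by
  simp only [dft_apply, smul_eq_mul, map_sum, map_mul, ← map_neg_eq_conj, neg_neg]

lemma sum_stdAddChar_mul (a : ZMod N) :
    ∑ k : ZMod N, (stdAddChar (k * a) : ℂ) = if a = 0 then (N : ℂ) else 0 := by
  classical
  simpa using sum_mulShift a (isPrimitive_stdAddChar N)

lemma dft_dft_mul_conj_dft_add (y : ZMod N → ℂ) (γ ω : ZMod N) :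
    𝓕 (fun k => 𝓕 y k * conj (𝓕 y (k + γ))) ω =
      N * stdAddChar (γ * ω) * 𝓕 (fun n => y n * conj (y (n + ω))) (-γ) := by
  classical
  have expand : ∀ k, stdAddChar (-(k * ω)) * (𝓕 y k * conj (𝓕 y (k + γ))) =
      ∑ n, ∑ n', y n * conj (y n') * stdAddChar (γ * n') * stdAddChar (k * (n' - n - ω)) := by
    intro k
    rw [conj_dft_apply, dft_apply, Finset.sum_mul_sum]
    simp only [Finset.mul_sum, smul_eq_mul]
    refine Finset.sum_congr rfl fun n _ => Finset.sum_congr rfl fun n' _ => ?_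
    have : stdAddChar (-(k * ω)) * stdAddChar (-(n * k)) * stdAddChar (n' * (k + γ)) =
        (stdAddChar (γ * n') * stdAddChar (k * (n' - n - ω)) : ℂ) := by
      simp only [← map_add_eq_mul]; ring_nf
    linear_combination (y n * conj (y n')) * this
  rw [dft_apply, dft_apply (fun n => y n * conj (y (n + ω)))]
  simp only [smul_eq_mul, expand]
  rw [Finset.sum_comm, Finset.mul_sum]
  refine Finset.sum_congr rfl fun n _ => ?_
  rw [Finset.sum_comm]
  simp only [← Finset.mul_sum, sum_stdAddChar_mul, sub_sub, sub_eq_zero, mul_ite, mul_zero,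
    Finset.sum_ite_eq', Finset.mem_univ, if_true]
  have : stdAddChar (γ * (n + ω)) = (stdAddChar (γ * ω) * stdAddChar (-(n * -γ)) : ℂ) := by
    rw [← map_add_eq_mul]; ring_nf
  rw [this]
  ring

lemma dftV_hadV_shiftV_conjV (y : ZMod N → ℂ) (γ ω : ZMod N) :
    dftV N (hadV (dftV N y) (shiftV γ (conjV (dftV N y)))) ω =
      N * stdAddChar (γ * ω) * 𝓕 (fun n => y n * conj (y (n + ω))) (-γ) := by
  rw [dftV_eq_dft, dftV_eq_dft]
  exact dft_dft_mul_conj_dft_add y γ ω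

lemma dft_norm_dft_sq (z : ZMod N → ℂ) (ω : ZMod N) :
    𝓕 (fun k => (‖𝓕 z k‖ : ℂ) ^ 2) ω = N * ∑ n, z n * conj (z (n + ω)) := by
  simpa [← Complex.mul_conj', dft_apply_zero] using dft_dft_mul_conj_dft_add z 0 ω

lemma dftMat_mul_mul_transpose_apply {L : ℕ} [NeZero L] (Y : Matrix (ZMod N) (ZMod L) ℂ)
    (α : ZMod L) (ω : ZMod N) :
    (dftMat L * Y.transpose * (dftMat N).transpose) α ω =
      ∑ ℓ, stdAddChar (-(α * ℓ)) * 𝓕 (fun k => Y k ℓ) ω := by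
  simp only [Matrix.mul_apply, Matrix.transpose_apply, dftMat_apply, dft_apply, smul_eq_mul,
    Finset.sum_mul, Finset.mul_sum]
  rw [Finset.sum_comm]
  exact Finset.sum_congr rfl fun ℓ _ => Finset.sum_congr rfl fun k _ => by ring_nf

lemma exists_sub_eq_of_dft_mul_conj_ne_zero {ρ : ℕ} (m : ZMod N → ℂ)
    (hm : ∀ k : ZMod N, ρ ≤ k.val → 𝓕 m k = 0) {ω j : ZMod N}
    (h : 𝓕 (fun p => m p * conj (m (p + ω))) j ≠ 0) :
    ∃ a b : ZMod N, a.val < ρ ∧ b.val < ρ ∧ j = a - b := by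
  obtain ⟨y, rfl⟩ : ∃ y, m = 𝓕 y := ⟨𝓕⁻ m, by simp⟩
  have hy : ∀ n, y n ≠ 0 → (-n).val < ρ := fun n hn => by
    by_contra! hρ
    have := hm (-n) hρ
    simp only [dft_dft, neg_neg, smul_eq_mul, mul_eq_zero, Nat.cast_eq_zero, NeZero.ne N,
      false_or] at this
    exact hn this
  rw [dft_dft_mul_conj_dft_add, dft_apply] at h
  obtain ⟨n, -, hn⟩ := Finset.exists_ne_zero_of_sum_ne_zero (right_ne_zero_of_mul h)
  simp only [smul_eq_mul, ne_eq, mul_eq_zero, map_eq_zero, not_or] at hn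
  exact ⟨-n, -(n + j), hy n hn.2.1, hy _ hn.2.2, by ring⟩

end Fourier

lemma sub_eq_neg_of_castHom_sub_eq {d L : ℕ} [NeZero d] (hL : L ∣ d) {ρ κ : ℕ}
    (hLρκ : L + 1 = ρ + κ) {a b : ZMod d} (ha : a.val < ρ) (hb : b.val < ρ) {β : ℤ}
    (hβ : |β| < κ) (h : castHom hL (ZMod L) (a - b) = -β) : a - b = -β := by
  have hdvd : (L : ℤ) ∣ a.val - b.val + β := by
    rw [← ZMod.intCast_zmod_eq_zero_iff_dvd]
    simp only [map_sub, castHom_apply, cast_eq_val] at h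
    push_cast
    linear_combination h
  have hβ' := abs_lt.mp hβ
  have hzero := Int.eq_zero_of_abs_lt_dvd hdvd (abs_lt.mpr ⟨by omega, by omega⟩)
  rw [← natCast_zmod_val a, ← natCast_zmod_val b, show β = -(a.val - b.val) by omega]
  push_cast
  ring

def stride (d L : ℕ) (ℓ : ZMod L) : ZMod d := ((ℓ.val * (d / L) : ℕ) : ZMod d)

section Subsampling

variable {d L : ℕ} [NeZero d] [NeZero L]

lemma stdAddChar_stride_mul (hL : L ∣ d) (ℓ : ZMod L) (j : ZMod d) :
    stdAddChar (stride d L ℓ * j) = stdAddChar (ℓ * castHom hL (ZMod L) j) := by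
  have hd : (d : ℂ) = L * (d / L : ℕ) := by exact_mod_cast (Nat.mul_div_cancel' hL).symm
  have hs : ((d / L : ℕ) : ℂ) ≠ 0 := fun h => NeZero.ne (d : ℂ) (by rw [hd, h, mul_zero])
  have hl : stride d L ℓ * j = (((ℓ.val * (d / L) * j.val : ℕ) : ℤ) : ZMod d) := by
    rw [stride, Int.cast_natCast, Nat.cast_mul _ j.val, natCast_zmod_val]
  have hr : ℓ * castHom hL (ZMod L) j = (((ℓ.val * j.val : ℕ) : ℤ) : ZMod L) := by
    rw [castHom_apply, cast_eq_val, Int.cast_natCast, Nat.cast_mul, natCast_zmod_val]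
  rw [hl, hr, stdAddChar_coe, stdAddChar_coe, hd]
  generalize d / L = s at hs ⊢
  congr 1
  push_cast
  field_simp

lemma sum_stdAddChar_mul_comp_sub_stride (hL : L ∣ d) (g : ZMod d → ℂ) (α : ZMod L)
    (n : ZMod d) :
    ∑ ℓ : ZMod L, stdAddChar (-(α * ℓ)) * g (n - stride d L ℓ) =
      L / d * ∑ j with castHom hL (ZMod L) j = -α, 𝓕 g j * stdAddChar (j * n) := by
  classical
  have inversion : ∀ q, g q = (d : ℂ)⁻¹ * ∑ j, stdAddChar (j * q) * 𝓕 g j := fun q => by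
    simpa using (congrFun ((dft (N := d)).symm_apply_apply g) q).symm.trans (invDFT_apply _ q)
  have character : ∀ (ℓ : ZMod L) (j : ZMod d),
      stdAddChar (-(α * ℓ)) * stdAddChar (j * (n - stride d L ℓ)) =
        (stdAddChar (j * n) * stdAddChar (ℓ * -(castHom hL (ZMod L) j + α)) : ℂ) := by
    intro ℓ j
    have hstride : stdAddChar (-(stride d L ℓ * j)) =
        (stdAddChar (-(ℓ * castHom hL (ZMod L) j)) : ℂ) := by
      rw [map_neg_eq_inv, map_neg_eq_inv, stdAddChar_stride_mul hL]
    rw [show j * (n - stride d L ℓ) = j * n + -(stride d L ℓ * j) by ring,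
      map_add_eq_mul, hstride, mul_left_comm, ← map_add_eq_mul]
    ring_nf
  simp only [inversion, Finset.mul_sum]
  rw [Finset.sum_comm, Finset.sum_filter]
  refine Finset.sum_congr rfl fun j _ => ?_
  calc ∑ ℓ : ZMod L, stdAddChar (-(α * ℓ)) *
        ((d : ℂ)⁻¹ * (stdAddChar (j * (n - stride d L ℓ)) * 𝓕 g j))
      = (d : ℂ)⁻¹ * 𝓕 g j * stdAddChar (j * n) *
          ∑ ℓ : ZMod L, stdAddChar (ℓ * -(castHom hL (ZMod L) j + α)) := by
        rw [Finset.mul_sum]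
        refine Finset.sum_congr rfl fun ℓ _ => ?_
        linear_combination ((d : ℂ)⁻¹ * 𝓕 g j) * character ℓ j
    _ = _ := by
        simp only [sum_stdAddChar_mul, neg_eq_zero, ← eq_neg_iff_add_eq_zero]
        split_ifs <;> ring

lemma sum_stdAddChar_mul_comp_sub_stride_eq_single (hL : L ∣ d) {ρ κ : ℕ}
    (hLρκ : L + 1 = ρ + κ) (g : ZMod d → ℂ)
    (hg : ∀ j, 𝓕 g j ≠ 0 → ∃ a b : ZMod d, a.val < ρ ∧ b.val < ρ ∧ j = a - b)
    {α : ZMod L} {β : ℤ} (hβα : (β : ZMod L) = α) (hβ : |β| < κ) (n : ZMod d) :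
    ∑ ℓ : ZMod L, stdAddChar (-(α * ℓ)) * g (n - stride d L ℓ) =
      L / d * 𝓕 g (-β) * stdAddChar (-(n * (β : ZMod d))) := by
  rw [sum_stdAddChar_mul_comp_sub_stride hL, Finset.sum_eq_single_of_mem (-β : ZMod d)]
  · ring_nf
  · simp only [Finset.mem_filter, Finset.mem_univ, true_and, map_neg, map_intCast, hβα]
  · intro j hj hne
    simp only [Finset.mem_filter, Finset.mem_univ, true_and] at hj
    by_contra hgj
    obtain ⟨a, b, ha, hb, rfl⟩ := hg j (left_ne_zero_of_mul hgj)
    exact hne (sub_eq_neg_of_castHom_sub_eq hL hLρκ ha hb hβ (by rw [hj, hβα]))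

end Subsampling

lemma dftMat_mul_mul_transpose_apply_of_bandlimited {d L ρ κ : ℕ} [NeZero d] [NeZero L]
    (hL : L ∣ d) (hLρκ : L + 1 = ρ + κ) (x m : ZMod d → ℂ)
    (hm : ∀ k : ZMod d, ρ ≤ k.val → 𝓕 m k = 0) (Y : Matrix (ZMod d) (ZMod L) ℂ)
    (hY : ∀ ω ℓ, Y ω ℓ = (‖𝓕 (fun n => x n * m (n - stride d L ℓ)) ω‖ : ℂ) ^ 2)
    (ω : ZMod d) {α : ZMod L} {β : ℤ} (hβα : (β : ZMod L) = α) (hβ : |β| < κ) :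
    (dftMat L * Y.transpose * (dftMat d).transpose) α ω =
      ((L : ℂ) / (d : ℂ) ^ 2) *
        dftV d (hadV (dftV d x) (shiftV ((-β : ℤ) : ZMod d) (conjV (dftV d x)))) ω *
        dftV d (hadV (dftV d m) (shiftV ((β : ℤ) : ZMod d) (conjV (dftV d m)))) ω := by
  set g : ZMod d → ℂ := fun p => m p * conj (m (p + ω)) with hg
  have collapse := sum_stdAddChar_mul_comp_sub_stride_eq_single hL hLρκ g
    (fun j => exists_sub_eq_of_dft_mul_conj_ne_zero m hm) hβα hβ
  calc (dftMat L * Y.transpose * (dftMat d).transpose) α ω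
      = ∑ ℓ, stdAddChar (-(α * ℓ)) *
          (d * ∑ n, x n * conj (x (n + ω)) * g (n - stride d L ℓ)) := by
        simp only [hg, dftMat_mul_mul_transpose_apply, hY, dft_norm_dft_sq, map_mul,
          add_sub_right_comm, mul_mul_mul_comm]
    _ = d * ∑ n, x n * conj (x (n + ω)) *
          ∑ ℓ, stdAddChar (-(α * ℓ)) * g (n - stride d L ℓ) := by
        simp only [Finset.mul_sum]
        rw [Finset.sum_comm]
        exact Finset.sum_congr rfl fun n _ => Finset.sum_congr rfl fun ℓ _ => by ring
    _ = _ := by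
        have hd : (d : ℂ) ≠ 0 := NeZero.ne _
        have hω :
            stdAddChar (-(β : ZMod d) * ω) * stdAddChar ((β : ZMod d) * ω) = (1 : ℂ) := by
          rw [← map_add_eq_mul, neg_mul, neg_add_cancel, map_zero_eq_one]
        simp only [collapse, dftV_hadV_shiftV_conjV, Int.cast_neg, neg_neg, ← hg]
        rw [dft_apply (fun n => x n * conj (x (n + ω)))]
        simp only [smul_eq_mul, Finset.mul_sum, Finset.sum_mul]
        refine Finset.sum_congr rfl fun n _ => ?_
        field_simp
        linear_combination
          -(x n * conj (x (n + ω)) * L * stdAddChar (-(n * (β : ZMod d))) * 𝓕 g (-β)) * hω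

theorem sum_collapse_bandlimited_general (d ρ κ L : ℕ) [NeZero d] [NeZero L]
    (hκ2 : 2 ≤ κ) (hLdef : L = ρ + κ - 1) (hL : L ∣ d)
    (x m : ZMod d → ℂ)
    (hsupp : ∀ k : ZMod d, ρ ≤ k.val → dftV d m k = 0)
    (Y : Matrix (ZMod d) (ZMod L) ℂ)
    (hY : ∀ (ω : ZMod d) (ℓ : ZMod L), Y ω ℓ =
      ((‖∑ n : ZMod d, x n * m (n - ((ℓ.val * (d / L) : ℕ) : ZMod d)) *
        Complex.exp (-2 * Real.pi * Complex.I * (n.val : ℂ) * (ω.val : ℂ) / (d : ℂ))‖) ^ 2 : ℂ)) :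
    ∀ (ω : ZMod d) (α : ZMod L),
      (α.val ≤ κ - 1 →
        (dftMat L * Y.transpose * (dftMat d).transpose) α ω =
          ((L : ℂ) / (d : ℂ) ^ 2) *
            dftV d (hadV (dftV d x) (shiftV ((-(α.val : ℤ) : ℤ) : ZMod d) (conjV (dftV d x)))) ω *
            dftV d (hadV (dftV d m) (shiftV (((α.val : ℤ) : ℤ) : ZMod d) (conjV (dftV d m)))) ω) ∧
      (ρ ≤ α.val →
        (dftMat L * Y.transpose * (dftMat d).transpose) α ω =
          ((L : ℂ) / (d : ℂ) ^ 2) *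
            dftV d (hadV (dftV d x) (shiftV (((L : ℤ) - (α.val : ℤ) : ℤ) : ZMod d) (conjV (dftV d x)))) ω *
            dftV d (hadV (dftV d m) (shiftV (((α.val : ℤ) - (L : ℤ) : ℤ) : ZMod d) (conjV (dftV d m)))) ω) := by
  intro ω α
  have hLρκ : L + 1 = ρ + κ := by omega
  have hm : ∀ k : ZMod d, ρ ≤ k.val → 𝓕 m k = 0 := by simpa only [dftV_eq_dft] using hsupp
  have hY' : ∀ ω ℓ, Y ω ℓ = (‖𝓕 (fun n => x n * m (n - stride d L ℓ)) ω‖ : ℂ) ^ 2 := by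
    intro ω ℓ
    rw [hY, ← dftV_eq_dft]
    rfl
  have hα := ZMod.val_lt α
  refine ⟨fun hακ => ?_, fun hρα => ?_⟩
  · exact dftMat_mul_mul_transpose_apply_of_bandlimited hL hLρκ x m hm Y hY' ω
      (by simp) (abs_lt.mpr ⟨by omega, by omega⟩)
  · rw [← neg_sub]
    exact dftMat_mul_mul_transpose_apply_of_bandlimited hL hLρκ x m hm Y hY' ω
      (by simp) (abs_lt.mpr ⟨by omega, by omega⟩)

/-- sum collapse for bandlimited masks, noiseless case. -/
theorem sum_collapse_bandlimited (d ρ κ L : ℕ) [NeZero d] [NeZero L]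
    (hκ2 : 2 ≤ κ) (hκρ : κ ≤ ρ) (hLdef : L = ρ + κ - 1) (hL : L ∣ d)
    (x m : ZMod d → ℂ)
    (hsupp : ∀ k : ZMod d, ρ ≤ k.val → dftV d m k = 0)
    (Y : Matrix (ZMod d) (ZMod L) ℂ)
    (hY : ∀ (ω : ZMod d) (ℓ : ZMod L), Y ω ℓ =
      ((‖∑ n : ZMod d, x n * m (n - ((ℓ.val * (d / L) : ℕ) : ZMod d)) *
        Complex.exp (-2 * Real.pi * Complex.I * (n.val : ℂ) * (ω.val : ℂ) / (d : ℂ))‖) ^ 2 : ℂ)) :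
    ∀ (ω : ZMod d) (α : ZMod L),
      (α.val ≤ κ - 1 →
        (dftMat L * Y.transpose * (dftMat d).transpose) α ω =
          ((L : ℂ) / (d : ℂ) ^ 2) *
            dftV d (hadV (dftV d x) (shiftV ((-(α.val : ℤ) : ℤ) : ZMod d) (conjV (dftV d x)))) ω *
            dftV d (hadV (dftV d m) (shiftV (((α.val : ℤ) : ℤ) : ZMod d) (conjV (dftV d m)))) ω) ∧
      (ρ ≤ α.val →
        (dftMat L * Y.transpose * (dftMat d).transpose) α ω =
          ((L : ℂ) / (d : ℂ) ^ 2) *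
            dftV d (hadV (dftV d x) (shiftV (((L : ℤ) - (α.val : ℤ) : ℤ) : ZMod d) (conjV (dftV d x)))) ω *
            dftV d (hadV (dftV d m) (shiftV (((α.val : ℤ) - (L : ℤ) : ℤ) : ZMod d) (conjV (dftV d m)))) ω) :=
  sum_collapse_bandlimited_general d ρ κ L hκ2 hLdef hL x m hsupp Y hY
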